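/- arXiv:1503.05238 — 6 statements merged into one kernel-verified Lean document; each statement's English description precedes it below -/
import Mathlib

section
/- If a sequence (θ^k) of Borel probability measures on [0,∞) satisfies the long-term condition, then for every s ≥ 0 one has θ^k([0,s]) → 0 as k → ∞. -/
open MeasureTheory Set Filter

/-- The `s`-total variation of a Borel measure `θ` on `[0,∞)`:
`TV_s(θ) = sup_{Q Borel ⊆ [0,∞)} |θ(Q) - θ(Q+s)|`. -/
noncomputable def TV (θ : Measure ℝ) (s : ℝ) : ℝ :=
  ⨆ Q : {Q : Set ℝ // MeasurableSet Q ∧ Q ⊆ Ici 0},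
    |(θ Q.1).toReal - (θ ((fun x => x + s) '' Q.1)).toReal|

/-- The long-term condition for a sequence of measures on `[0,∞)`. -/
def LTC (θ : ℕ → Measure ℝ) : Prop :=
  ∀ S > (0:ℝ), Tendsto (fun k => ⨆ s : Icc (0:ℝ) S, TV (θ k) s) atTop (nhds 0)

lemma tv_abs_le_one (θ : Measure ℝ) [IsProbabilityMeasure θ] (s : ℝ)
    (Q : {Q : Set ℝ // MeasurableSet Q ∧ Q ⊆ Ici 0}) :
    |(θ Q.1).toReal - (θ ((fun x => x + s) '' Q.1)).toReal| ≤ 1 := by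
  have h1 : (θ Q.1).toReal ≤ 1 := by
    have := prob_le_one (μ := θ) (s := Q.1)
    simpa using ENNReal.toReal_le_of_le_ofReal zero_le_one (by simpa using this)
  have h2 : (θ ((fun x => x + s) '' Q.1)).toReal ≤ 1 := by
    have := prob_le_one (μ := θ) (s := (fun x => x + s) '' Q.1)
    simpa using ENNReal.toReal_le_of_le_ofReal zero_le_one (by simpa using this)
  have h3 : 0 ≤ (θ Q.1).toReal := ENNReal.toReal_nonneg
  have h4 : 0 ≤ (θ ((fun x => x + s) '' Q.1)).toReal := ENNReal.toReal_nonneg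
  rw [abs_sub_le_iff]; constructor <;> linarith

lemma TV_le_one (θ : Measure ℝ) [IsProbabilityMeasure θ] (s : ℝ) : TV θ s ≤ 1 := by
  haveI : Nonempty { Q : Set ℝ // MeasurableSet Q ∧ Q ⊆ Ici 0 } :=
    ⟨⟨∅, MeasurableSet.empty, empty_subset _⟩⟩
  apply ciSup_le (α := ℝ)
  exact fun Q => tv_abs_le_one θ s Q

lemma TV_nonneg (θ : Measure ℝ) [IsProbabilityMeasure θ] (s : ℝ) : 0 ≤ TV θ s := by
  have h := le_ciSup (f := fun Q : {Q : Set ℝ // MeasurableSet Q ∧ Q ⊆ Ici 0} =>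
      |(θ Q.1).toReal - (θ ((fun x => x + s) '' Q.1)).toReal|)
    (c := ⟨∅, MeasurableSet.empty, empty_subset _⟩)
    ⟨1, by rintro x ⟨Q, rfl⟩; exact tv_abs_le_one θ s Q⟩
  exact le_trans (abs_nonneg _) h

theorem ltc_initial_mass_vanishes (θ : ℕ → Measure ℝ)
    (hprob : ∀ k, IsProbabilityMeasure (θ k)) (hsupp : ∀ k, θ k (Iio 0) = 0)
    (hltc : LTC θ) (s : ℝ) (hs : 0 ≤ s) :
    Tendsto (fun k => (θ k (Icc 0 s)).toReal) atTop (nhds 0) := by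
  have hS : (0:ℝ) < s + 1 := by linarith
  have hg := hltc (s + 1) hS
  apply squeeze_zero (fun k => ENNReal.toReal_nonneg) _ hg
  intro k
  haveI := hprob k
  -- θ k (Icc 0 s) ≤ TV (θ k) (s+1)
  have hIci0 : θ k (Ici 0) = 1 := by
    have : Ici (0:ℝ) = (Iio 0)ᶜ := by simp
    rw [this, measure_compl measurableSet_Iio (measure_ne_top _ _), hsupp k,
      measure_univ]
    simp
  have himg : (fun x => x + (s+1)) '' Ici (0:ℝ) = Ici (s+1) := by
    rw [Set.image_add_const_Ici]; simp
  have hmono : θ k (Icc 0 s) ≤ θ k (Iio (s+1)) := by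
    apply measure_mono
    intro x hx
    exact lt_of_le_of_lt hx.2 (by linarith)
  have hsplit : (θ k (Iio (s+1))).toReal =
      (θ k (Ici 0)).toReal - (θ k (Ici (s+1))).toReal := by
    have hcompl : Ici (s+1) = (Iio (s+1))ᶜ := by simp
    rw [hcompl, measure_compl measurableSet_Iio (measure_ne_top _ _), measure_univ,
      hIci0]
    rw [ENNReal.toReal_sub_of_le (prob_le_one) (by simp)]
    simp
  have key : (θ k (Icc 0 s)).toReal ≤ TV (θ k) (s+1) := by
    have h1 : (θ k (Icc 0 s)).toReal ≤ (θ k (Iio (s+1))).toReal :=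
      ENNReal.toReal_mono (measure_ne_top _ _) hmono
    have h2 : (θ k (Iio (s+1))).toReal ≤ TV (θ k) (s+1) := by
      have hle := le_ciSup (f := fun Q : {Q : Set ℝ // MeasurableSet Q ∧ Q ⊆ Ici 0} =>
          |(θ k Q.1).toReal - (θ k ((fun x => x + (s+1)) '' Q.1)).toReal|)
        (c := ⟨Ici 0, measurableSet_Ici, subset_rfl⟩)
        ⟨1, by rintro x ⟨Q, rfl⟩; exact tv_abs_le_one (θ k) (s+1) Q⟩
      simp only [himg] at hle
      calc (θ k (Iio (s+1))).toReal
          = (θ k (Ici 0)).toReal - (θ k (Ici (s+1))).toReal := hsplit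
        _ ≤ |(θ k (Ici 0)).toReal - (θ k (Ici (s+1))).toReal| := le_abs_self _
        _ ≤ TV (θ k) (s+1) := hle
    linarith
  have h3 : TV (θ k) (s+1) ≤ ⨆ t : Icc (0:ℝ) (s+1), TV (θ k) t := by
    apply le_ciSup (f := fun t : Icc (0:ℝ) (s+1) => TV (θ k) t)
      (c := ⟨s+1, le_of_lt hS, le_refl _⟩)
    exact ⟨1, by rintro x ⟨t, rfl⟩; exact TV_le_one (θ k) t⟩
  linarith
end

section
/- If (θ^k) is a sequence of Borel probability measures on [0,∞) satisfying the long-term condition, then the first moments diverge: ∫_0^∞ t dθ^k(t) → ∞ as k → ∞ (in the sense that for every M > 0, eventually ∫ t dθ^k(t) ≥ M; measures with infinite first moment count as ≥ M). -/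
open MeasureTheory Set Filter
open scoped ENNReal Topology

/-!
If every shift `s ∈ [0, N L]` changes the measure of Borel subsets of `[0, ∞)` by at most `ε`,
then the `N` disjoint translates `[j L, (j + 1) L)` of `[0, L)` each carry mass at least
`θ[0, L) - ε`, so `θ[0, L) ≤ 1 / N + ε`. Under the LTC the mass of every bounded interval thus
tends to `0`; eventually `θ[L, ∞) > 1 / 2`, and Markov's inequality gives `∫ t dθ ≥ L / 2`.
-/

lemma ofReal_mul_measure_Ici_le_lintegral (μ : Measure ℝ) (L : ℝ) :
    ENNReal.ofReal L * μ (Ici L) ≤ ∫⁻ t, ENNReal.ofReal t ∂μ :=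
  calc ENNReal.ofReal L * μ (Ici L)
      ≤ ENNReal.ofReal L * μ {t | ENNReal.ofReal L ≤ ENNReal.ofReal t} := by
        gcongr
        exact fun _ ht => ENNReal.ofReal_le_ofReal ht
    _ ≤ ∫⁻ t, ENNReal.ofReal t ∂μ := mul_meas_ge_le_lintegral ENNReal.measurable_ofReal _

lemma measureReal_Ici_eq_one_sub_measureReal_Ico (θ : Measure ℝ) [IsProbabilityMeasure θ]
    (hθ : θ (Iio 0) = 0) {L : ℝ} (hL : 0 ≤ L) :
    θ.real (Ici L) = 1 - θ.real (Ico 0 L) := by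
  have hIci : θ.real (Ici 0) = 1 := by
    rw [← compl_Iio, probReal_compl_eq_one_sub measurableSet_Iio, measureReal_def, hθ]
    simp
  rw [← hIci, ← Ico_union_Ici_eq_Ici hL,
    measureReal_union ((Iio_disjoint_Ici le_rfl).mono_left Ico_subset_Iio_self) measurableSet_Ici]
  ring

section TotalVariation

variable (θ : Measure ℝ) [IsFiniteMeasure θ]

lemma abs_measureReal_sub_measureReal_le_univ (A B : Set ℝ) :
    |θ.real A - θ.real B| ≤ θ.real univ :=
  abs_sub_le_of_nonneg_of_le measureReal_nonneg (measureReal_mono (subset_univ A))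
    measureReal_nonneg (measureReal_mono (subset_univ B))

lemma TV_le_measureReal_univ (s : ℝ) : TV θ s ≤ θ.real univ :=
  have : Nonempty {Q : Set ℝ // MeasurableSet Q ∧ Q ⊆ Ici 0} :=
    ⟨⟨∅, MeasurableSet.empty, empty_subset _⟩⟩
  ciSup_le fun _ => abs_measureReal_sub_measureReal_le_univ θ _ _

lemma measureReal_sub_measureReal_image_add_le_TV {Q : Set ℝ} (hQ : MeasurableSet Q)
    (hQ0 : Q ⊆ Ici 0) (s : ℝ) :
    θ.real Q - θ.real ((fun x => x + s) '' Q) ≤ TV θ s := by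
  have hbdd : BddAbove (range fun Q : {Q : Set ℝ // MeasurableSet Q ∧ Q ⊆ Ici 0} =>
      |θ.real Q.1 - θ.real ((fun x => x + s) '' Q.1)|) := by
    refine ⟨θ.real univ, ?_⟩
    rintro _ ⟨Q', rfl⟩
    exact abs_measureReal_sub_measureReal_le_univ θ _ _
  exact (le_abs_self _).trans (le_ciSup hbdd ⟨Q, hQ, hQ0⟩)

lemma TV_le_iSup_TV {S s : ℝ} (hs : s ∈ Icc 0 S) :
    TV θ s ≤ ⨆ s : Icc (0:ℝ) S, TV θ s :=
  le_ciSup (f := fun s : Icc (0:ℝ) S => TV θ s)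
    ⟨θ.real univ, by
      rintro _ ⟨s', rfl⟩
      exact TV_le_measureReal_univ θ s'⟩
    ⟨s, hs⟩

lemma mul_measureReal_Ico_sub_le_measureReal_univ {L ε : ℝ} (N : ℕ)
    (hTV : ∀ j < N, TV θ (j * L) ≤ ε) :
    N * (θ.real (Ico 0 L) - ε) ≤ θ.real univ := by
  have hshift : ∀ j : ℕ,
      (fun x => x + j * L) '' Ico 0 L = Ico (0 + (j : ℤ) • L) (0 + ((j : ℤ) + 1) • L) := by
    intro j
    rw [image_add_const_Ico]
    congr 1 <;> simp only [zsmul_eq_mul] <;> push_cast <;> ring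
  have hdisj :
      PairwiseDisjoint (↑(Finset.range N)) fun j : ℕ => (fun x => x + j * L) '' Ico 0 L := by
    simp only [hshift]
    exact Pairwise.set_pairwise
      ((pairwise_disjoint_Ico_add_zsmul 0 L).comp_of_injective Nat.cast_injective) _
  calc (N : ℝ) * (θ.real (Ico 0 L) - ε)
      = ∑ _j ∈ Finset.range N, (θ.real (Ico 0 L) - ε) := by
        rw [Finset.sum_const, Finset.card_range, nsmul_eq_mul]
    _ ≤ ∑ j ∈ Finset.range N, θ.real ((fun x => x + j * L) '' Ico 0 L) := by
      refine Finset.sum_le_sum fun j hj => ?_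
      have := measureReal_sub_measureReal_image_add_le_TV θ
        (measurableSet_Ico (a := 0) (b := L)) (fun _ hx => hx.1) (j * L)
      linarith [hTV j (Finset.mem_range.mp hj)]
    _ = θ.real (⋃ j ∈ Finset.range N, (fun x => x + j * L) '' Ico 0 L) :=
      (measureReal_biUnion_finset hdisj fun j _ => by rw [hshift]; exact measurableSet_Ico).symm
    _ ≤ θ.real univ := measureReal_mono (subset_univ _)

end TotalVariation

theorem LTC.tendsto_measureReal_Ico {θ : ℕ → Measure ℝ} (hltc : LTC θ)
    [∀ k, IsProbabilityMeasure (θ k)] {L : ℝ} (hL : 0 < L) :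
    Tendsto (fun k => (θ k).real (Ico 0 L)) atTop (𝓝 0) := by
  refine tendsto_order.2
    ⟨fun a ha => Eventually.of_forall fun k => ha.trans_le measureReal_nonneg, fun δ hδ => ?_⟩
  obtain ⟨N, hN⟩ := exists_nat_gt (2 / δ)
  have hN0 : (0 : ℝ) < N := (div_pos two_pos hδ).trans hN
  filter_upwards [(hltc (N * L) (mul_pos hN0 hL)).eventually_lt_const (half_pos hδ)] with k hk
  have hTV : ∀ j < N, TV (θ k) (j * L) ≤ δ / 2 := fun j hj =>
    (TV_le_iSup_TV (θ k) ⟨by positivity, by gcongr⟩).trans hk.le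
  have hmass := mul_measureReal_Ico_sub_le_measureReal_univ (θ k) N hTV
  rw [probReal_univ] at hmass
  have hNδ : 1 < N * (δ / 2) := by rw [div_lt_iff₀ hδ] at hN; linarith
  nlinarith

theorem ltc_first_moment_tendsto_top (θ : ℕ → Measure ℝ)
    (hprob : ∀ k, IsProbabilityMeasure (θ k)) (hsupp : ∀ k, θ k (Iio 0) = 0)
    (hltc : LTC θ) :
    Tendsto (fun k => ∫⁻ t, ENNReal.ofReal t ∂(θ k)) atTop (nhds ⊤) := by
  rw [ENNReal.tendsto_nhds_top_iff_nat]
  intro n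
  set L : ℝ := 2 * (n + 1)
  have hL : 0 < L := by positivity
  filter_upwards [(hltc.tendsto_measureReal_Ico hL).eventually_lt_const one_half_pos] with k hk
  have htail : 1 / 2 < (θ k).real (Ici L) := by
    rw [measureReal_Ici_eq_one_sub_measureReal_Ico (θ k) (hsupp k) hL.le]
    linarith
  calc (n : ℝ≥0∞) = ENNReal.ofReal n := (ENNReal.ofReal_natCast n).symm
    _ < ENNReal.ofReal (L * (θ k).real (Ici L)) := by
      rw [ENNReal.ofReal_lt_ofReal_iff (by positivity)]
      nlinarith
    _ = ENNReal.ofReal L * θ k (Ici L) := by rw [ENNReal.ofReal_mul hL.le, ofReal_measureReal]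
    _ ≤ ∫⁻ t, ENNReal.ofReal t ∂(θ k) := ofReal_mul_measure_Ici_le_lintegral (θ k) L
end

section
/- Let θ^k be the exponential distribution with parameter λ_k > 0 (density s ↦ λ_k e^{−λ_k s} on [0,∞)) for each k. Then the sequence (θ^k) satisfies the long-term condition if and only if λ_k → 0 as k → ∞. -/
/-! The exponential law is memoryless: for `Q ⊆ [0,∞)`, shifting `Q` by `s ≥ 0` multiplies its
mass by `e^{-λs}`. Hence `|θ(Q) - θ(Q+s)| = (1 - e^{-λs}) θ(Q)`, maximal at `Q = [0,∞)`, so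
`TV_s(θ) = 1 - e^{-λs}` and `sup_{0≤s≤S} TV_s(θ) = 1 - e^{-λS}`, which tends to `0` iff `λ → 0`. -/

open MeasureTheory Set Filter

open ProbabilityTheory Real Topology
open scoped ENNReal

lemma expMeasure_eq_withDensity (r : ℝ) :
    expMeasure r = volume.withDensity
      (fun t => ENNReal.ofReal (if 0 ≤ t then r * exp (-r * t) else 0)) := by
  simp_rw [neg_mul, ← exponentialPDF_eq]
  rfl

lemma exponentialPDF_add {r s x : ℝ} (hs : 0 ≤ s) (hx : 0 ≤ x) :
    exponentialPDF r (x + s) = ENNReal.ofReal (exp (-(r * s))) * exponentialPDF r x := by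
  rw [exponentialPDF_of_nonneg (add_nonneg hx hs), exponentialPDF_of_nonneg hx,
    ← ENNReal.ofReal_mul (exp_nonneg _), mul_add, neg_add, exp_add]
  ring_nf

lemma withDensity_image_add_right (f : ℝ → ℝ≥0∞) (s : ℝ) (Q : Set ℝ) :
    volume.withDensity f ((· + s) '' Q) = ∫⁻ x in Q, f (x + s) := by
  rw [withDensity_apply', (measurePreserving_add_right volume s).setLIntegral_comp_emb
    (measurableEmbedding_addRight s)]

lemma expMeasure_image_add_right {r s : ℝ} (hs : 0 ≤ s) {Q : Set ℝ} (hQ : MeasurableSet Q)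
    (hQ₀ : Q ⊆ Ici 0) :
    expMeasure r ((· + s) '' Q) = ENNReal.ofReal (exp (-(r * s))) * expMeasure r Q := by
  rw [expMeasure, gammaMeasure, withDensity_image_add_right, withDensity_apply _ hQ,
    ← lintegral_const_mul' _ _ ENNReal.ofReal_ne_top]
  exact setLIntegral_congr_fun hQ fun x hx => exponentialPDF_add hs (hQ₀ hx)

lemma expMeasure_Ici_zero {r : ℝ} (hr : 0 < r) : expMeasure r (Ici 0) = 1 := by
  have := isProbabilityMeasure_expMeasure hr
  rw [← prob_compl_eq_zero_iff measurableSet_Ici, compl_Ici, expMeasure, gammaMeasure,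
    withDensity_apply _ measurableSet_Iio]
  exact lintegral_exponentialPDF_of_nonpos le_rfl

lemma TV_eq_of_image_add_right_eq_mul {μ : Measure ℝ} [IsFiniteMeasure μ] {s c : ℝ}
    (hc₀ : 0 ≤ c) (hc₁ : c ≤ 1)
    (h : ∀ Q, MeasurableSet Q → Q ⊆ Ici 0 → μ ((· + s) '' Q) = ENNReal.ofReal c * μ Q) :
    TV μ s = (1 - c) * μ.real (Ici 0) := by
  have hval : ∀ Q, MeasurableSet Q → Q ⊆ Ici 0 →
      |(μ Q).toReal - (μ ((· + s) '' Q)).toReal| = (1 - c) * μ.real Q := by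
    intro Q hQ hQ₀
    rw [h Q hQ hQ₀, ENNReal.toReal_mul, ENNReal.toReal_ofReal hc₀, ← one_sub_mul,
      abs_of_nonneg (mul_nonneg (by linarith) ENNReal.toReal_nonneg)]
    rfl
  have hmax : IsMaxOn (fun Q => |(μ Q).toReal - (μ ((· + s) '' Q)).toReal|)
      {Q | MeasurableSet Q ∧ Q ⊆ Ici 0} (Ici 0) := by
    rintro Q ⟨hQ, hQ₀⟩
    simp only [mem_ofPred_eq, hval Q hQ hQ₀, hval _ measurableSet_Ici subset_rfl]
    exact mul_le_mul_of_nonneg_left (measureReal_mono hQ₀) (by linarith)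
  rw [TV, ← hval _ measurableSet_Ici subset_rfl]
  exact hmax.iSup_eq (s := {Q | MeasurableSet Q ∧ Q ⊆ Ici 0}) ⟨measurableSet_Ici, subset_rfl⟩

lemma TV_expMeasure {r s : ℝ} (hr : 0 < r) (hs : 0 ≤ s) :
    TV (expMeasure r) s = 1 - exp (-(r * s)) := by
  have := isProbabilityMeasure_expMeasure hr
  rw [TV_eq_of_image_add_right_eq_mul (exp_nonneg _) (exp_le_one_iff.2 (by nlinarith))
    fun Q hQ hQ₀ => expMeasure_image_add_right hs hQ hQ₀, measureReal_def,
    expMeasure_Ici_zero hr, ENNReal.toReal_one, mul_one]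

lemma iSup_Icc_TV_expMeasure {r S : ℝ} (hr : 0 < r) (hS : 0 ≤ S) :
    ⨆ s : Icc (0:ℝ) S, TV (expMeasure r) s = 1 - exp (-(r * S)) := by
  have hmax : IsMaxOn (TV (expMeasure r)) (Icc 0 S) S := by
    rintro s ⟨hs₀, hsS⟩
    simp only [mem_ofPred_eq, TV_expMeasure hr hs₀, TV_expMeasure hr hS]
    gcongr
  rw [← TV_expMeasure hr hS]
  exact hmax.iSup_eq ⟨hS, le_rfl⟩

lemma tendsto_one_sub_exp_neg_mul_iff {ι : Type*} {L : Filter ι} {l : ι → ℝ} {S : ℝ}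
    (hS : S ≠ 0) :
    Tendsto (fun k => 1 - exp (-(l k * S))) L (𝓝 0) ↔ Tendsto l L (𝓝 0) := by
  constructor
  · intro h
    have hlog : ContinuousAt (fun y => -log (1 - y) / S) 0 :=
      ((continuousAt_log (by norm_num)).comp (by fun_prop)).neg.div_const S
    simpa [Function.comp_def, hS] using hlog.tendsto.comp h
  · intro h
    have hcont : Continuous fun x => 1 - exp (-(x * S)) := by fun_prop
    simpa [Function.comp_def] using (hcont.tendsto 0).comp h

theorem ltc_exponential_iff (l : ℕ → ℝ) (hl : ∀ k, 0 < l k) (θ : ℕ → Measure ℝ)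
    (hθ : ∀ k, θ k = volume.withDensity
      (fun t => ENNReal.ofReal (if 0 ≤ t then l k * Real.exp (-(l k) * t) else 0))) :
    LTC θ ↔ Tendsto l atTop (nhds 0) := by
  have hθexp : ∀ k, θ k = expMeasure (l k) := fun k => by
    rw [hθ k, expMeasure_eq_withDensity]
  have hsup : ∀ S > 0, (fun k => ⨆ s : Icc (0:ℝ) S, TV (θ k) s)
      = fun k => 1 - exp (-(l k * S)) := fun S hS => by
    simp only [hθexp, iSup_Icc_TV_expMeasure (hl _) hS.le]
  refine ⟨fun h => ?_, fun h S hS => ?_⟩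
  · have h₁ := h 1 one_pos
    rw [hsup 1 one_pos] at h₁
    exact (tendsto_one_sub_exp_neg_mul_iff one_ne_zero).1 h₁
  · rw [hsup S hS]
    exact (tendsto_one_sub_exp_neg_mul_iff hS.ne').2 h
end

section
/- (Characterization of the limit candidate) Under the setting of the key lower bound (shift-invariant family of [0,1]-valued Borel cost functions h_u, u ∈ 𝒰, and V_ν = inf_u ∫ h_u dν), if (θ^k) is a sequence of probability measures on [0,∞) satisfying the long-term condition, then sup over all probability measures μ on [0,∞) of inf_{t≥0} V_{T_t♯μ} equals sup_{k≥1} inf_{t≥0} V_{T_t♯θ^k}. -/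
/-!
Since the family `h` is closed under shifts and the measures live on `[0,∞)`, shifting a measure
can only raise its value, so `inf_t V(T_t♯μ) = V(μ)` and only `V(μ) ≤ sup_k V(θ^k)` needs work.
Fix `ε`, a cutoff `M` with `μ(M,∞) ≤ ε`, a window length `S ≥ M/ε`, and `k` with
`TV_s(θ^k) ≤ ε` for `s ≤ S`. For every `u`, averaging `V(μ) ≤ ∫ h_u(x + y + t) dμ(x)` over
`t ∈ (0,S]` gives `S V(μ) ≤ inf_y ∫_y^{y+S} h_u + M + Sε`: a start `x ≤ M` moves the window's
integral by at most `x`, and the mass beyond `M` costs at most `Sε`. Conversely, integrating `inf_y ∫_y^{y+S} h_u ≤ ∫_x^{x+S} h_u`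
against `θ^k` and using `∫ h_u(x + t) dθ^k ≤ ∫ h_u dθ^k + TV_t(θ^k)` gives
`inf_y ∫_y^{y+S} h_u ≤ S (∫ h_u dθ^k + ε)`. Hence `V(μ) ≤ V(θ^k) + 3ε`.
-/

open MeasureTheory Set Filter

lemma integrable_of_nonneg_of_le_one {X : Type*} [MeasurableSpace X] {μ : Measure X}
    [IsFiniteMeasure μ] {f : X → ℝ} (hf : Measurable f) (hf0 : ∀ x, 0 ≤ f x)
    (hf1 : ∀ x, f x ≤ 1) : Integrable f μ :=
  .of_bound hf.aestronglyMeasurable 1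
    (.of_forall fun x => by rw [Real.norm_of_nonneg (hf0 x)]; exact hf1 x)

lemma integral_le_integral_add_of_measureReal_le {X : Type*} [MeasurableSpace X]
    {α ν : Measure X} [IsFiniteMeasure α] [IsFiniteMeasure ν] {c : ℝ}
    (hαν : ∀ P, MeasurableSet P → α.real P ≤ ν.real P + c) {f : X → ℝ} (hf : Measurable f)
    (hf0 : ∀ x, 0 ≤ f x) (hf1 : ∀ x, f x ≤ 1) :
    ∫ x, f x ∂α ≤ (∫ x, f x ∂ν) + c := by
  have layerCake : ∀ (μ : Measure X) [IsFiniteMeasure μ],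
      ∫ x, f x ∂μ = ∫ t in Ioc 0 1, μ.real {x | t ≤ f x} ∧
        IntegrableOn (fun t => μ.real {x | t ≤ f x}) (Ioc 0 1) := by
    intro μ _
    refine ⟨(integrable_of_nonneg_of_le_one hf hf0 hf1).integral_eq_integral_Ioc_meas_le
      (.of_forall hf0) (.of_forall hf1), ?_⟩
    have hanti : Antitone fun t => μ.real {x | t ≤ f x} :=
      fun s t hst => measureReal_mono fun x hx => hst.trans hx
    exact ((hanti.antitoneOn _).integrableOn_isCompact isCompact_Icc).mono_set Ioc_subset_Icc_self
  have hc : IntegrableOn (fun _ => c) (Ioc (0:ℝ) 1) := integrableOn_const measure_Ioc_lt_top.ne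
  obtain ⟨hα, hαi⟩ := layerCake α
  obtain ⟨hν, hνi⟩ := layerCake ν
  calc ∫ x, f x ∂α ≤ ∫ t in Ioc 0 1, (ν.real {x | t ≤ f x} + c) := by
        rw [hα]
        exact setIntegral_mono_on hαi (hνi.add hc) measurableSet_Ioc
          fun t _ => hαν _ (measurableSet_le measurable_const hf)
    _ = (∫ x, f x ∂ν) + c := by
        rw [integral_add hνi hc, hν, setIntegral_const]
        simp

lemma ae_nonneg_of_measure_Iio_eq_zero {ν : Measure ℝ} (hν : ν (Iio 0) = 0) :
    ∀ᵐ x ∂ν, 0 ≤ x := by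
  rw [ae_iff]
  simp only [not_le]
  exact hν

lemma exists_measureReal_Ioi_le (μ : Measure ℝ) [IsFiniteMeasure μ] {ε : ℝ} (hε : 0 < ε) :
    ∃ M, 0 ≤ M ∧ μ.real (Ioi M) ≤ ε := by
  have hIic : Tendsto (fun x => μ.real (Iic x)) atTop (nhds (μ.real univ)) :=
    (ENNReal.tendsto_toReal (measure_ne_top μ univ)).comp (tendsto_measure_Iic_atTop μ)
  obtain ⟨M, hM, hclose⟩ := ((eventually_ge_atTop 0).and
    (hIic.eventually (Ioi_mem_nhds (sub_lt_self _ hε)))).exists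
  refine ⟨M, hM, ?_⟩
  rw [← compl_Iic, measureReal_compl measurableSet_Iic]
  linarith [hclose]

lemma abs_sub_measureReal_image_add_le_TV (θ : Measure ℝ) [IsFiniteMeasure θ] (s : ℝ)
    {Q : Set ℝ} (hQ : MeasurableSet Q) (hQ0 : Q ⊆ Ici 0) :
    |θ.real Q - θ.real ((· + s) '' Q)| ≤ TV θ s :=
  le_ciSup (f := fun Q : {Q : Set ℝ // MeasurableSet Q ∧ Q ⊆ Ici 0} =>
      |θ.real Q.1 - θ.real ((· + s) '' Q.1)|)
    ⟨θ.real univ, by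
      rintro _ ⟨Q, rfl⟩
      exact abs_sub_le_of_nonneg_of_le measureReal_nonneg (measureReal_mono (subset_univ _))
        measureReal_nonneg (measureReal_mono (subset_univ _))⟩
    ⟨Q, hQ, hQ0⟩

lemma measureReal_preimage_add_le (ν : Measure ℝ) [IsFiniteMeasure ν] (hν : ν (Iio 0) = 0)
    (s : ℝ) {P : Set ℝ} (hP : MeasurableSet P) :
    ν.real ((· + s) ⁻¹' P) ≤ ν.real P + TV ν s := by
  set R := (· + s) ⁻¹' P ∩ Ici 0
  have hR : ν.real ((· + s) ⁻¹' P) = ν.real R := by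
    rw [measureReal_def, measureReal_def, measure_inter_conull (by rwa [compl_Ici])]
  have hRP : (· + s) '' R ⊆ P := image_subset_iff.mpr inter_subset_left
  have hTV := abs_sub_measureReal_image_add_le_TV ν s
    ((hP.preimage (measurable_add_const s)).inter measurableSet_Ici) inter_subset_right
  linarith [(abs_sub_le_iff.mp hTV).1, measureReal_mono (μ := ν) hRP]

lemma integral_comp_add_le_add_TV (ν : Measure ℝ) [IsFiniteMeasure ν] (hν : ν (Iio 0) = 0)
    (s : ℝ) {f : ℝ → ℝ} (hf : Measurable f) (hf0 : ∀ x, 0 ≤ f x) (hf1 : ∀ x, f x ≤ 1) :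
    ∫ x, f (x + s) ∂ν ≤ (∫ x, f x ∂ν) + TV ν s := by
  rw [← (measurableEmbedding_addRight s).integral_map]
  refine integral_le_integral_add_of_measureReal_le (fun P hP => ?_) hf hf0 hf1
  rw [map_measureReal_apply (measurable_add_const s) hP]
  exact measureReal_preimage_add_le ν hν s hP

lemma LTC.exists_forall_TV_le {θ : ℕ → Measure ℝ} (hltc : LTC θ)
    (hprob : ∀ k, IsProbabilityMeasure (θ k)) {S δ : ℝ} (hS : 0 < S) (hδ : 0 < δ) :
    ∃ k, ∀ s ∈ Icc 0 S, TV (θ k) s ≤ δ := by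
  obtain ⟨k, hk⟩ := ((hltc S hS).eventually_lt_const hδ).exists
  refine ⟨k, fun s hs => le_trans ?_ hk.le⟩
  exact le_ciSup (f := fun s : Icc (0:ℝ) S => TV (θ k) s)
    ⟨1, by rintro _ ⟨s, rfl⟩; exact TV_le_one (θ k) s⟩ ⟨s, hs⟩

section Window

variable {g : ℝ → ℝ} {S : ℝ}

lemma intervalIntegral_le_sub_of_le_one (hg0 : ∀ x, 0 ≤ g x) (hg1 : ∀ x, g x ≤ 1) {a b : ℝ}
    (hab : a ≤ b) : ∫ y in a..b, g y ≤ b - a := by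
  have := intervalIntegral.norm_integral_le_of_norm_le_const (a := a) (b := b) (C := 1)
    fun y _ => by rw [Real.norm_of_nonneg (hg0 y)]; exact hg1 y
  rw [one_mul, abs_of_nonneg (sub_nonneg.mpr hab)] at this
  exact (le_abs_self _).trans this

lemma intervalIntegrable_of_nonneg_of_le_one (hg : Measurable g) (hg0 : ∀ x, 0 ≤ g x)
    (hg1 : ∀ x, g x ≤ 1) (a b : ℝ) : IntervalIntegrable g volume a b :=
  intervalIntegrable_iff.mpr <| Measure.integrableOn_of_bounded measure_Ioc_lt_top.ne
    hg.aestronglyMeasurable (M := 1) <| .of_forall fun y => by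
      rw [Real.norm_of_nonneg (hg0 y)]; exact hg1 y

/-- The window `(x, x + S]` loses `(0, x]`, where `g ≥ 0`, and gains `(S, S + x]`,
where `g ≤ 1`. -/
lemma setIntegral_Ioc_comp_add_le (hg : Measurable g) (hg0 : ∀ x, 0 ≤ g x)
    (hg1 : ∀ x, g x ≤ 1) {x : ℝ} (hx : 0 ≤ x) (hS : 0 ≤ S) :
    ∫ t in Ioc 0 S, g (x + t) ≤ (∫ t in Ioc 0 S, g t) + x := by
  have hii := intervalIntegrable_of_nonneg_of_le_one hg hg0 hg1
  rw [← intervalIntegral.integral_of_le hS, ← intervalIntegral.integral_of_le hS,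
    intervalIntegral.integral_comp_add_left, add_zero]
  have hsplit := (intervalIntegral.integral_add_adjacent_intervals (hii 0 x) (hii x (x + S))).trans
    (intervalIntegral.integral_add_adjacent_intervals (hii 0 S) (hii S (x + S))).symm
  have hleft : 0 ≤ ∫ y in (0:ℝ)..x, g y := intervalIntegral.integral_nonneg hx fun y _ => hg0 y
  have hright := intervalIntegral_le_sub_of_le_one hg0 hg1 (by linarith : S ≤ x + S)
  linarith

lemma setIntegral_Ioc_comp_add_le_length (hg0 : ∀ x, 0 ≤ g x) (hg1 : ∀ x, g x ≤ 1) (x : ℝ)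
    (hS : 0 ≤ S) : ∫ t in Ioc 0 S, g (x + t) ≤ S := by
  rw [← intervalIntegral.integral_of_le hS]
  simpa using intervalIntegral_le_sub_of_le_one (g := fun t => g (x + t)) (fun _ => hg0 _)
    (fun _ => hg1 _) hS

lemma integrable_uncurry_comp_add (hg : Measurable g) (hg0 : ∀ x, 0 ≤ g x)
    (hg1 : ∀ x, g x ≤ 1) (ν : Measure ℝ) [IsFiniteMeasure ν] :
    Integrable (Function.uncurry fun t x => g (x + t)) ((volume.restrict (Ioc 0 S)).prod ν) :=
  integrable_of_nonneg_of_le_one (hg.comp (measurable_snd.add measurable_fst))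
    (fun _ => hg0 _) (fun _ => hg1 _)

lemma integral_setIntegral_Ioc_comp_add_le (hg : Measurable g) (hg0 : ∀ x, 0 ≤ g x)
    (hg1 : ∀ x, g x ≤ 1) (μ : Measure ℝ) [IsProbabilityMeasure μ] (hμ : μ (Iio 0) = 0)
    (hS : 0 ≤ S) {M : ℝ} (hM : 0 ≤ M) :
    ∫ x, (∫ t in Ioc 0 S, g (x + t)) ∂μ ≤ (∫ t in Ioc 0 S, g t) + M + S * μ.real (Ioi M) := by
  set B := ∫ t in Ioc 0 S, g t
  have hB : 0 ≤ B := setIntegral_nonneg measurableSet_Ioc fun t _ => hg0 t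
  have hbound : ∀ᵐ x ∂μ, ∫ t in Ioc 0 S, g (x + t) ≤ B + M + S * (Ioi M).indicator 1 x := by
    filter_upwards [ae_nonneg_of_measure_Iio_eq_zero hμ] with x hx
    by_cases hxM : x ≤ M
    · rw [indicator_of_notMem (s := Ioi M) (not_lt.mpr hxM)]
      linarith [setIntegral_Ioc_comp_add_le hg hg0 hg1 hx hS]
    · rw [indicator_of_mem (s := Ioi M) (lt_of_not_ge hxM), Pi.one_apply, mul_one]
      linarith [setIntegral_Ioc_comp_add_le_length hg0 hg1 x hS]
  have hind : Integrable ((Ioi M).indicator (1 : ℝ → ℝ)) μ :=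
    (integrable_const 1).indicator measurableSet_Ioi
  calc ∫ x, (∫ t in Ioc 0 S, g (x + t)) ∂μ
      ≤ ∫ x, (B + M + S * (Ioi M).indicator 1 x) ∂μ :=
        integral_mono_ae (integrable_uncurry_comp_add hg hg0 hg1 μ).integral_prod_right
          ((integrable_const _).add (hind.const_mul S)) hbound
    _ = B + M + S * μ.real (Ioi M) := by
        rw [integral_add (integrable_const _) (hind.const_mul S), integral_const_mul,
          integral_indicator_one measurableSet_Ioi]
        simp

lemma iInf_setIntegral_Ioc_comp_add_le (hg : Measurable g) (hg0 : ∀ x, 0 ≤ g x)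
    (hg1 : ∀ x, g x ≤ 1) (ν : Measure ℝ) [IsProbabilityMeasure ν] (hν : ν (Iio 0) = 0)
    (hS : 0 ≤ S) {δ : ℝ} (hTV : ∀ s ∈ Icc 0 S, TV ν s ≤ δ) :
    ⨅ y : Ici (0:ℝ), ∫ t in Ioc 0 S, g (y + t) ≤ S * ((∫ x, g x ∂ν) + δ) := by
  have hI := integrable_uncurry_comp_add (S := S) hg hg0 hg1 ν
  have hbdd : BddBelow (range fun y : Ici (0:ℝ) => ∫ t in Ioc 0 S, g (y + t)) :=
    ⟨0, by rintro _ ⟨y, rfl⟩; exact setIntegral_nonneg measurableSet_Ioc fun t _ => hg0 _⟩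
  have hle : ∀ᵐ x ∂ν, ⨅ y : Ici (0:ℝ), ∫ t in Ioc 0 S, g (y + t) ≤ ∫ t in Ioc 0 S, g (x + t) :=
    (ae_nonneg_of_measure_Iio_eq_zero hν).mono fun x hx => ciInf_le hbdd ⟨x, hx⟩
  calc ⨅ y : Ici (0:ℝ), ∫ t in Ioc 0 S, g (y + t)
      ≤ ∫ x, (∫ t in Ioc 0 S, g (x + t)) ∂ν := by
        simpa using integral_mono_ae (integrable_const _) hI.integral_prod_right hle
    _ = ∫ t in Ioc 0 S, (∫ x, g (x + t) ∂ν) := (integral_integral_swap hI).symm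
    _ ≤ ∫ t in Ioc 0 S, ((∫ x, g x ∂ν) + δ) :=
        setIntegral_mono_on hI.integral_prod_left (integrableOn_const measure_Ioc_lt_top.ne)
          measurableSet_Ioc fun t ht =>
            (integral_comp_add_le_add_TV ν hν t hg hg0 hg1).trans
              (add_le_add_right (hTV t ⟨ht.1.le, ht.2⟩) _)
    _ = S * ((∫ x, g x ∂ν) + δ) := by
        rw [setIntegral_const, Real.volume_real_Ioc_of_le hS, sub_zero, smul_eq_mul]

end Window

/-- The value `V_ν = inf_u ∫ h_u dν`. -/
noncomputable def infIntegral {U : Type*} (h : U → ℝ → ℝ) (ν : Measure ℝ) : ℝ :=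
  ⨅ u, ∫ x, h u x ∂ν

section Family

variable {U : Type*} {h : U → ℝ → ℝ}

lemma infIntegral_nonneg (h0 : ∀ u s, 0 ≤ h u s) (ν : Measure ℝ) : 0 ≤ infIntegral h ν :=
  Real.iInf_nonneg fun u => integral_nonneg (h0 u)

lemma bddBelow_range_integral (h0 : ∀ u s, 0 ≤ h u s) (ν : Measure ℝ) :
    BddBelow (range fun u => ∫ x, h u x ∂ν) :=
  ⟨0, by rintro _ ⟨u, rfl⟩; exact integral_nonneg (h0 u)⟩

lemma infIntegral_le_one [Nonempty U] (h0 : ∀ u s, 0 ≤ h u s) (h1 : ∀ u s, h u s ≤ 1)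
    (ν : Measure ℝ) [IsProbabilityMeasure ν] : infIntegral h ν ≤ 1 := by
  let u := Classical.arbitrary U
  calc infIntegral h ν ≤ ∫ x, h u x ∂ν := ciInf_le (bddBelow_range_integral h0 ν) u
    _ ≤ ∫ _, (1:ℝ) ∂ν :=
        integral_mono_of_nonneg (.of_forall (h0 u)) (integrable_const 1) (.of_forall (h1 u))
    _ = 1 := by simp

lemma infIntegral_le_integral_comp_add (h0 : ∀ u s, 0 ≤ h u s)
    (hshift : ∀ (u : U) (T : ℝ), 0 ≤ T → ∃ u' : U, ∀ s ≥ (0:ℝ), h u' s = h u (s + T))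
    {ν : Measure ℝ} (hν : ν (Iio 0) = 0) (u : U) {r : ℝ} (hr : 0 ≤ r) :
    infIntegral h ν ≤ ∫ x, h u (x + r) ∂ν := by
  obtain ⟨u', hu'⟩ := hshift u r hr
  calc infIntegral h ν ≤ ∫ x, h u' x ∂ν := ciInf_le (bddBelow_range_integral h0 ν) u'
    _ = ∫ x, h u (x + r) ∂ν :=
        integral_congr_ae ((ae_nonneg_of_measure_Iio_eq_zero hν).mono hu')

lemma iInf_infIntegral_map_add [Nonempty U] (h0 : ∀ u s, 0 ≤ h u s)
    (hshift : ∀ (u : U) (T : ℝ), 0 ≤ T → ∃ u' : U, ∀ s ≥ (0:ℝ), h u' s = h u (s + T))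
    {ν : Measure ℝ} (hν : ν (Iio 0) = 0) :
    ⨅ t : Ici (0:ℝ), infIntegral h (ν.map (· + (t:ℝ))) = infIntegral h ν := by
  refine le_antisymm ?_ (le_ciInf fun t => ?_)
  · have hbdd : BddBelow (range fun t : Ici (0:ℝ) => infIntegral h (ν.map (· + (t:ℝ)))) :=
      ⟨0, by rintro _ ⟨t, rfl⟩; exact infIntegral_nonneg h0 _⟩
    simpa using ciInf_le hbdd ⟨0, self_mem_Ici⟩
  · refine le_ciInf fun u => ?_
    rw [(measurableEmbedding_addRight (t:ℝ)).integral_map]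
    exact infIntegral_le_integral_comp_add h0 hshift hν u t.2

lemma mul_infIntegral_le (hmeas : ∀ u, Measurable (h u)) (h0 : ∀ u s, 0 ≤ h u s)
    (h1 : ∀ u s, h u s ≤ 1)
    (hshift : ∀ (u : U) (T : ℝ), 0 ≤ T → ∃ u' : U, ∀ s ≥ (0:ℝ), h u' s = h u (s + T))
    (μ : Measure ℝ) [IsProbabilityMeasure μ] (hμ : μ (Iio 0) = 0) (u : U) {S M : ℝ}
    (hS : 0 ≤ S) (hM : 0 ≤ M) :
    S * infIntegral h μ ≤
      (⨅ y : Ici (0:ℝ), ∫ t in Ioc 0 S, h u (y + t)) + M + S * μ.real (Ioi M) := by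
  suffices ∀ y : Ici (0:ℝ), S * infIntegral h μ - M - S * μ.real (Ioi M) ≤
      ∫ t in Ioc 0 S, h u (y + t) by
    linarith [le_ciInf this]
  intro y
  have hg : Measurable fun z => h u (y + z) := (hmeas u).comp (measurable_const_add _)
  have hI := integrable_uncurry_comp_add (S := S) hg (fun _ => h0 u _) (fun _ => h1 u _) μ
  have hwindow := integral_setIntegral_Ioc_comp_add_le hg (fun _ => h0 u _) (fun _ => h1 u _)
    μ hμ hS hM
  have hshifted : ∀ t ∈ Ioc 0 S, infIntegral h μ ≤ ∫ x, h u (y + (x + t)) ∂μ := fun t ht => by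
    simpa only [add_left_comm] using
      infIntegral_le_integral_comp_add h0 hshift hμ u (add_nonneg y.2 ht.1.le)
  have hlower : S * infIntegral h μ ≤ ∫ t in Ioc 0 S, (∫ x, h u (y + (x + t)) ∂μ) := by
    calc S * infIntegral h μ = ∫ _ in Ioc 0 S, infIntegral h μ := by
          rw [setIntegral_const, Real.volume_real_Ioc_of_le hS, sub_zero, smul_eq_mul]
      _ ≤ _ := setIntegral_mono_on (integrableOn_const measure_Ioc_lt_top.ne)
          hI.integral_prod_left measurableSet_Ioc hshifted
  rw [integral_integral_swap hI] at hlower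
  linarith

lemma infIntegral_le_infIntegral_add [Nonempty U] (hmeas : ∀ u, Measurable (h u))
    (h0 : ∀ u s, 0 ≤ h u s) (h1 : ∀ u s, h u s ≤ 1)
    (hshift : ∀ (u : U) (T : ℝ), 0 ≤ T → ∃ u' : U, ∀ s ≥ (0:ℝ), h u' s = h u (s + T))
    (μ ν : Measure ℝ) [IsProbabilityMeasure μ] [IsProbabilityMeasure ν] (hμ : μ (Iio 0) = 0)
    (hν : ν (Iio 0) = 0) {S M δ : ℝ} (hS : 0 < S) (hM : 0 ≤ M)
    (hTV : ∀ s ∈ Icc 0 S, TV ν s ≤ δ) :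
    infIntegral h μ ≤ infIntegral h ν + δ + M / S + μ.real (Ioi M) := by
  suffices ∀ u, infIntegral h μ - δ - M / S - μ.real (Ioi M) ≤ ∫ x, h u x ∂ν by
    linarith [show _ ≤ infIntegral h ν from le_ciInf this]
  intro u
  have hμside := mul_infIntegral_le hmeas h0 h1 hshift μ hμ u hS.le hM
  have hνside := iInf_setIntegral_Ioc_comp_add_le (hmeas u) (h0 u) (h1 u) ν hν hS.le hTV
  have hMS : S * (M / S) = M := mul_div_cancel₀ M hS.ne'
  nlinarith

lemma infIntegral_le_iSup_of_LTC [Nonempty U] (hmeas : ∀ u, Measurable (h u))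
    (h0 : ∀ u s, 0 ≤ h u s) (h1 : ∀ u s, h u s ≤ 1)
    (hshift : ∀ (u : U) (T : ℝ), 0 ≤ T → ∃ u' : U, ∀ s ≥ (0:ℝ), h u' s = h u (s + T))
    {θ : ℕ → Measure ℝ} (hprob : ∀ k, IsProbabilityMeasure (θ k))
    (hsupp : ∀ k, θ k (Iio 0) = 0) (hltc : LTC θ)
    (μ : Measure ℝ) [IsProbabilityMeasure μ] (hμ : μ (Iio 0) = 0) :
    infIntegral h μ ≤ ⨆ k, infIntegral h (θ k) := by
  have hbdd : BddAbove (range fun k => infIntegral h (θ k)) :=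
    ⟨1, by rintro _ ⟨k, rfl⟩; exact infIntegral_le_one h0 h1 (θ k)⟩
  refine le_of_forall_pos_le_add fun ε hε => ?_
  obtain ⟨M, hM, htail⟩ := exists_measureReal_Ioi_le μ (by positivity : 0 < ε / 3)
  set S := 3 * M / ε + 1
  have hS : 0 < S := by positivity
  have hMS : M / S ≤ ε / 3 := by
    have hεS : ε / 3 * S = M + ε / 3 := by simp only [S]; field_simp
    rw [div_le_iff₀ hS]
    linarith
  obtain ⟨k, hk⟩ := hltc.exists_forall_TV_le hprob hS (by positivity : 0 < ε / 3)
  calc infIntegral h μ ≤ infIntegral h (θ k) + ε / 3 + M / S + μ.real (Ioi M) :=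
        infIntegral_le_infIntegral_add hmeas h0 h1 hshift μ (θ k) hμ (hsupp k) hS hM hk
    _ ≤ (⨆ k, infIntegral h (θ k)) + ε := by linarith [le_ciSup hbdd k]

end Family

theorem limit_value_characterization {U : Type*} [Nonempty U]
    (h : U → ℝ → ℝ) (hmeas : ∀ u, Measurable (h u))
    (h0 : ∀ u s, 0 ≤ h u s) (h1 : ∀ u s, h u s ≤ 1)
    (hshift : ∀ (u : U) (T : ℝ), 0 ≤ T → ∃ u' : U, ∀ s ≥ (0:ℝ), h u' s = h u (s + T))
    (V : Measure ℝ → ℝ) (hV : ∀ ν, V ν = ⨅ u, ∫ s, h u s ∂ν)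
    (θ : ℕ → Measure ℝ) (hprob : ∀ k, IsProbabilityMeasure (θ k))
    (hsupp : ∀ k, θ k (Iio 0) = 0) (hltc : LTC θ) :
    (⨆ μ : {μ : Measure ℝ // IsProbabilityMeasure μ ∧ μ (Iio 0) = 0},
        ⨅ t : Ici (0:ℝ), V (Measure.map (fun x => x + (t:ℝ)) μ.1)) =
      ⨆ k : ℕ, ⨅ t : Ici (0:ℝ), V (Measure.map (fun x => x + (t:ℝ)) (θ k)) := by
  obtain rfl : V = infIntegral h := funext hV
  have : Nonempty {μ : Measure ℝ // IsProbabilityMeasure μ ∧ μ (Iio 0) = 0} :=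
    ⟨⟨θ 0, hprob 0, hsupp 0⟩⟩
  rw [iSup_congr fun μ => iInf_infIntegral_map_add h0 hshift μ.2.2,
    iSup_congr fun k => iInf_infIntegral_map_add h0 hshift (hsupp k)]
  refine le_antisymm (ciSup_le fun μ => ?_) (ciSup_le fun k => ?_)
  · have := μ.2.1
    exact infIntegral_le_iSup_of_LTC hmeas h0 h1 hshift hprob hsupp hltc μ.1 μ.2.2
  · refine le_ciSup (f := fun μ : {μ : Measure ℝ // IsProbabilityMeasure μ ∧ μ (Iio 0) = 0} =>
      infIntegral h μ.1) ⟨1, ?_⟩ ⟨θ k, hprob k, hsupp k⟩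
    rintro _ ⟨μ, rfl⟩
    have := μ.2.1
    exact infIntegral_le_one h0 h1 μ.1
end

section
/- (Upper bound via bounded shifts) Under the setting of the key lower bound (shift-invariant family of [0,1]-valued Borel cost functions and V_ν = inf_u ∫ h_u dν), if (θ^k) satisfies the long-term condition then for every T₀ ≥ 0: limsup_{k→∞} V_{θ^k} = limsup_{k→∞} inf_{0 ≤ t ≤ T₀} V_{T_t♯θ^k}. In particular, limsup_k V_{θ^k} ≤ sup_{k≥1} inf_{0 ≤ t ≤ T₀} V_{T_t♯θ^k}. -/
open MeasureTheory Set Filter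

theorem upper_bound_bounded_shifts {U : Type*} [Nonempty U]
    (h : U → ℝ → ℝ) (hmeas : ∀ u, Measurable (h u))
    (h0 : ∀ u s, 0 ≤ h u s) (h1 : ∀ u s, h u s ≤ 1)
    (hshift : ∀ (u : U) (T : ℝ), 0 ≤ T → ∃ u' : U, ∀ s ≥ (0:ℝ), h u' s = h u (s + T))
    (V : Measure ℝ → ℝ) (hV : ∀ ν, V ν = ⨅ u, ∫ s, h u s ∂ν)
    (θ : ℕ → Measure ℝ) (hprob : ∀ k, IsProbabilityMeasure (θ k))
    (hsupp : ∀ k, θ k (Iio 0) = 0) (hltc : LTC θ)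
    (T₀ : ℝ) (hT₀ : 0 ≤ T₀) :
    (Filter.limsup (fun k => V (θ k)) atTop =
      Filter.limsup (fun k => ⨅ t : Icc (0:ℝ) T₀,
        V (Measure.map (fun x => x + (t:ℝ)) (θ k))) atTop) ∧
    Filter.limsup (fun k => V (θ k)) atTop ≤
      ⨆ k : ℕ, ⨅ t : Icc (0:ℝ) T₀, V (Measure.map (fun x => x + (t:ℝ)) (θ k)) := by
  -- Basic facts about V
  have hbdd : ∀ ν : Measure ℝ, BddBelow (range fun u => ∫ s, h u s ∂ν) := by
    intro ν
    exact ⟨0, by rintro x ⟨u, rfl⟩; exact integral_nonneg (h0 u)⟩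
  have hVnonneg : ∀ ν : Measure ℝ, 0 ≤ V ν := by
    intro ν
    rw [hV]
    exact le_ciInf fun u => integral_nonneg (h0 u)
  have hVle1 : ∀ k, V (θ k) ≤ 1 := by
    intro k
    have := hprob k
    obtain ⟨u₀⟩ := (inferInstance : Nonempty U)
    rw [hV]
    refine le_trans (ciInf_le (hbdd _) u₀) ?_
    have hint : Integrable (h u₀) (θ k) :=
      (integrable_const (1:ℝ)).mono' (hmeas u₀).aestronglyMeasurable
        (Eventually.of_forall fun s => by
          rw [Real.norm_eq_abs, abs_of_nonneg (h0 u₀ s)]; exact h1 u₀ s)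
    calc ∫ s, h u₀ s ∂(θ k) ≤ ∫ _, (1:ℝ) ∂(θ k) :=
          integral_mono hint (integrable_const 1) (h1 u₀)
      _ = 1 := by simp
  -- The key pointwise identity
  have hkey : ∀ k, (⨅ t : Icc (0:ℝ) T₀,
      V (Measure.map (fun x => x + (t:ℝ)) (θ k))) = V (θ k) := by
    intro k
    apply le_antisymm
    · have h0mem : (0:ℝ) ∈ Icc (0:ℝ) T₀ := ⟨le_refl 0, hT₀⟩
      have hb : BddBelow (range fun t : Icc (0:ℝ) T₀ =>
          V (Measure.map (fun x => x + (t:ℝ)) (θ k))) :=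
        ⟨0, by rintro x ⟨t, rfl⟩; exact hVnonneg _⟩
      have := ciInf_le hb (⟨0, h0mem⟩ : Icc (0:ℝ) T₀)
      simpa using this
    · have : Nonempty (Icc (0:ℝ) T₀) := ⟨⟨0, le_refl 0, hT₀⟩⟩
      apply le_ciInf
      rintro ⟨t, ht0, htT⟩
      rw [hV (Measure.map (fun x => x + t) (θ k))]
      apply le_ciInf
      intro u
      obtain ⟨u', hu'⟩ := hshift u t ht0
      have hmap : ∫ s, h u s ∂(Measure.map (fun x => x + t) (θ k))
          = ∫ s, h u (s + t) ∂(θ k) :=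
        integral_map (measurable_add_const t).aemeasurable (hmeas u).aestronglyMeasurable
      have hae : ∀ᵐ s ∂(θ k), h u' s = h u (s + t) := by
        have hpos : ∀ᵐ s ∂(θ k), (0:ℝ) ≤ s := by
          rw [ae_iff]
          convert hsupp k using 2
          ext s
          simp [not_le]
        filter_upwards [hpos] with s hs
        exact hu' s hs
      rw [hmap, ← integral_congr_ae hae, hV (θ k)]
      exact ciInf_le (hbdd _) u'
  constructor
  · exact congrArg (fun f => Filter.limsup f atTop) (funext fun k => (hkey k).symm)
  · simp only [hkey]
    have hcb : Filter.IsCoboundedUnder (· ≤ ·) atTop (fun k => V (θ k)) :=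
      Filter.isCoboundedUnder_le_of_le atTop (fun k => hVnonneg (θ k))
    refine Filter.limsup_le_of_le hcb (Eventually.of_forall fun k => ?_)
    exact le_ciSup (f := fun k => V (θ k))
      ⟨1, by rintro x ⟨k, rfl⟩; exact hVle1 k⟩ k
end

section
/- (Folded normal density unimodality) Let m > 0, σ > 0 and let f(t) = (1/(σ√(2π)))·[exp(−(t−m)²/(2σ²)) + exp(−(t+m)²/(2σ²))] be the folded normal density on [0,∞). Then there exists t* ∈ [0, m) such that f'(t) > 0 for all t ∈ (0, t*) and f'(t) < 0 for all t ∈ (t*, ∞); moreover (t*)² ≥ m² − σ². -/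
open MeasureTheory Set Filter

set_option maxHeartbeats 2000000 in
theorem folded_normal_unimodal (m σ : ℝ) (hm : 0 < m) (hσ : 0 < σ)
    (f : ℝ → ℝ)
    (hf : ∀ t, f t = (1 / (σ * Real.sqrt (2 * Real.pi))) *
      (Real.exp (-(t - m) ^ 2 / (2 * σ ^ 2)) + Real.exp (-(t + m) ^ 2 / (2 * σ ^ 2)))) :
    ∃ tstar ∈ Ico (0:ℝ) m,
      (∀ t ∈ Ioo 0 tstar, 0 < deriv f t) ∧
      (∀ t ∈ Ioi tstar, deriv f t < 0) ∧
      m ^ 2 - σ ^ 2 ≤ tstar ^ 2 := by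
  have hσ2 : (0:ℝ) < σ ^ 2 := by positivity
  set c : ℝ := 1 / (σ * Real.sqrt (2 * Real.pi)) with hcdef
  have hc : 0 < c := by
    have h2π : 0 < Real.sqrt (2 * Real.pi) := Real.sqrt_pos.mpr (by positivity)
    positivity
  have hfeq : f = fun t => c * (Real.exp (-(t - m) ^ 2 / (2 * σ ^ 2)) +
      Real.exp (-(t + m) ^ 2 / (2 * σ ^ 2))) := funext hf
  set a : ℝ := m / σ ^ 2 with hadef
  have ha : 0 < a := div_pos hm hσ2
  set φ : ℝ → ℝ := fun t => Real.exp (2 * a * t) * (m - t) - (m + t) with hφdef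
  -- derivative of f
  have hfd : ∀ t : ℝ, HasDerivAt f
      (c * (Real.exp (-(t - m) ^ 2 / (2 * σ ^ 2)) * (-(2 * (t - m) ^ 1 * 1) / (2 * σ ^ 2)) +
        Real.exp (-(t + m) ^ 2 / (2 * σ ^ 2)) * (-(2 * (t + m) ^ 1 * 1) / (2 * σ ^ 2)))) t := by
    intro t
    rw [hfeq]
    exact ((((((hasDerivAt_id t).sub_const m).pow 2).neg.div_const (2 * σ ^ 2)).exp.add
      (((((hasDerivAt_id t).add_const m).pow 2).neg.div_const (2 * σ ^ 2)).exp)).const_mul c)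
  have hE : ∀ t : ℝ, Real.exp (-(t - m) ^ 2 / (2 * σ ^ 2)) =
      Real.exp (-(t + m) ^ 2 / (2 * σ ^ 2)) * Real.exp (2 * a * t) := by
    intro t
    rw [← Real.exp_add]
    congr 1
    rw [hadef]
    field_simp
    ring
  have hD : ∀ t : ℝ, deriv f t =
      (c / σ ^ 2) * (Real.exp (-(t + m) ^ 2 / (2 * σ ^ 2)) * φ t) := by
    intro t
    rw [(hfd t).deriv, hE t, hφdef]
    field_simp
    ring
  have hpos : ∀ t : ℝ, 0 < φ t → 0 < deriv f t := by
    intro t h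
    rw [hD t]
    exact mul_pos (div_pos hc hσ2) (mul_pos (Real.exp_pos _) h)
  have hneg : ∀ t : ℝ, φ t < 0 → deriv f t < 0 := by
    intro t h
    rw [hD t]
    exact mul_neg_of_pos_of_neg (div_pos hc hσ2) (mul_neg_of_pos_of_neg (Real.exp_pos _) h)
  have hφ_ge : ∀ t : ℝ, m ≤ t → φ t < 0 := by
    intro t ht
    have h1 : Real.exp (2 * a * t) * (m - t) ≤ 0 :=
      mul_nonpos_of_nonneg_of_nonpos (Real.exp_pos _).le (by linarith)
    simp only [hφdef]
    linarith
  set ψ : ℝ → ℝ := fun t => Real.log (m - t) + 2 * a * t - Real.log (m + t) with hψdef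
  have hψ0 : ψ 0 = 0 := by simp [hψdef]
  have hψd : ∀ t : ℝ, -m < t → t < m →
      HasDerivAt ψ (-1 / (m - t) + 2 * a * 1 - 1 / (m + t)) t := by
    intro t h1 h2
    have hmt : m - t ≠ 0 := by linarith
    have hpt : m + t ≠ 0 := by linarith
    have H1 : HasDerivAt (fun x : ℝ => Real.log (m - x)) (-1 / (m - t)) t :=
      ((hasDerivAt_id t).const_sub m).log hmt
    have H2 : HasDerivAt (fun x : ℝ => 2 * a * x) (2 * a * 1) t :=
      (hasDerivAt_id t).const_mul (2 * a)
    have H3 : HasDerivAt (fun x : ℝ => Real.log (m + x)) (1 / (m + t)) t :=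
      ((hasDerivAt_id t).const_add m).log hpt
    exact (H1.add H2).sub H3
  have hdψ_eq : ∀ t : ℝ, -m < t → t < m →
      -1 / (m - t) + 2 * a * 1 - 1 / (m + t) =
        2 * m * (m ^ 2 - t ^ 2 - σ ^ 2) / (σ ^ 2 * ((m - t) * (m + t))) := by
    intro t h1 h2
    have hmt : m - t ≠ 0 := by linarith
    have hpt : m + t ≠ 0 := by linarith
    rw [hadef]
    field_simp
    ring
  have hderivψ : ∀ t : ℝ, -m < t → t < m →
      deriv ψ t = 2 * m * (m ^ 2 - t ^ 2 - σ ^ 2) / (σ ^ 2 * ((m - t) * (m + t))) := by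
    intro t h1 h2
    rw [(hψd t h1 h2).deriv, hdψ_eq t h1 h2]
  have contψ : ContinuousOn ψ (Ico 0 m) := by
    intro t ht
    exact ((hψd t (by linarith [ht.1]) ht.2).continuousAt).continuousWithinAt
  have hψφ_pos : ∀ t : ℝ, 0 ≤ t → t < m → 0 < ψ t → 0 < φ t := by
    intro t h0 h1 h
    have hmt : 0 < m - t := by linarith
    have hpt : 0 < m + t := by linarith
    have key : ψ t = Real.log (Real.exp (2 * a * t) * (m - t)) - Real.log (m + t) := by
      rw [Real.log_mul (Real.exp_ne_zero _) hmt.ne', Real.log_exp, hψdef]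
      ring
    rw [key] at h
    have := (Real.log_lt_log_iff hpt (mul_pos (Real.exp_pos _) hmt)).mp (by linarith)
    simp only [hφdef]
    linarith
  have hψφ_neg : ∀ t : ℝ, 0 ≤ t → t < m → ψ t < 0 → φ t < 0 := by
    intro t h0 h1 h
    have hmt : 0 < m - t := by linarith
    have hpt : 0 < m + t := by linarith
    have key : ψ t = Real.log (Real.exp (2 * a * t) * (m - t)) - Real.log (m + t) := by
      rw [Real.log_mul (Real.exp_ne_zero _) hmt.ne', Real.log_exp, hψdef]
      ring
    rw [key] at h
    have := (Real.log_lt_log_iff (mul_pos (Real.exp_pos _) hmt) hpt).mp (by linarith)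
    simp only [hφdef]
    linarith
  rcases le_or_gt (m ^ 2) (σ ^ 2) with hcase | hcase
  · -- m² ≤ σ² : tstar = 0
    refine ⟨0, ⟨le_refl 0, hm⟩, ?_, ?_, by nlinarith⟩
    · intro t ht; exact absurd ht (by simp)
    · intro t ht
      have ht0 : (0:ℝ) < t := ht
      rcases lt_or_ge t m with htm | htm
      · apply hneg
        apply hψφ_neg t ht0.le htm
        have hanti : StrictAntiOn ψ (Ico 0 m) := by
          apply strictAntiOn_of_deriv_neg (convex_Ico 0 m) contψ
          intro x hx
          rw [interior_Ico] at hx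
          rw [hderivψ x (by linarith [hx.1]) hx.2]
          apply div_neg_of_neg_of_pos
          · have hx2 : 0 < x ^ 2 := pow_pos hx.1 2
            nlinarith [mul_pos hm hx2]
          · have h1 : 0 < m - x := by linarith [hx.2]
            have h2 : 0 < m + x := by linarith [hx.1]
            positivity
        have := hanti ⟨le_refl 0, hm⟩ ⟨ht0.le, htm⟩ ht0
        rw [hψ0] at this; linarith
      · exact hneg t (hφ_ge t htm)
  · -- σ² < m²
    set r : ℝ := Real.sqrt (m ^ 2 - σ ^ 2) with hrdef
    have hr2 : r ^ 2 = m ^ 2 - σ ^ 2 := Real.sq_sqrt (by linarith)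
    have hrpos : 0 < r := Real.sqrt_pos.mpr (by linarith)
    have hrm : r < m := by nlinarith
    have hmono : StrictMonoOn ψ (Icc 0 r) := by
      apply strictMonoOn_of_deriv_pos (convex_Icc 0 r)
        (contψ.mono (fun x hx => ⟨hx.1, lt_of_le_of_lt hx.2 hrm⟩))
      intro x hx
      rw [interior_Icc] at hx
      have hxm : x < m := lt_trans hx.2 hrm
      rw [hderivψ x (by linarith [hx.1]) hxm]
      apply div_pos
      · have hxr : x ^ 2 < r ^ 2 := by
          nlinarith [mul_pos (sub_pos.mpr hx.2) (show (0:ℝ) < r + x by linarith [hx.1, hrpos])]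
        nlinarith [mul_pos hm (show (0:ℝ) < m ^ 2 - x ^ 2 - σ ^ 2 by nlinarith [hr2])]
      · have h1 : 0 < m - x := by linarith
        have h2 : 0 < m + x := by linarith [hx.1]
        positivity
    have hanti : StrictAntiOn ψ (Ico r m) := by
      apply strictAntiOn_of_deriv_neg (convex_Ico r m)
        (contψ.mono (fun x hx => ⟨le_trans hrpos.le hx.1, hx.2⟩))
      intro x hx
      rw [interior_Ico] at hx
      rw [hderivψ x (by linarith [hx.1, hrpos]) hx.2]
      apply div_neg_of_neg_of_pos
      · have hxr : r ^ 2 < x ^ 2 := by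
          nlinarith [mul_pos (sub_pos.mpr hx.1) (show (0:ℝ) < x + r by linarith [hx.1, hrpos])]
        nlinarith [mul_pos hm (show (0:ℝ) < x ^ 2 + σ ^ 2 - m ^ 2 by nlinarith [hr2])]
      · have h1 : 0 < m - x := by linarith [hx.2]
        have h2 : 0 < m + x := by linarith [hx.1, hrpos]
        positivity
    have hψr : 0 < ψ r := by
      have := hmono ⟨le_refl 0, hrpos.le⟩ ⟨hrpos.le, le_refl r⟩ hrpos
      rw [hψ0] at this; linarith
    set δ : ℝ := m * Real.exp (-(2 * a * m)) / 2 with hδdef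
    have hδpos : 0 < δ := by positivity
    have hδm : δ < m := by
      have h2am : 0 < 2 * a * m := by positivity
      have h1 : Real.exp (-(2 * a * m)) < 1 := Real.exp_lt_one_iff.mpr (by linarith)
      have h2 := mul_lt_mul_of_pos_left h1 hm
      rw [hδdef]; linarith
    set t₁ : ℝ := m - δ with ht₁def
    have ht₁pos : 0 < t₁ := by rw [ht₁def]; linarith
    have ht₁m : t₁ < m := by rw [ht₁def]; linarith
    have hψt₁ : ψ t₁ < 0 := by
      have hlogδ : Real.log δ = Real.log m + (-(2 * a * m)) - Real.log 2 := by
        rw [hδdef, Real.log_div (by positivity) two_ne_zero,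
          Real.log_mul hm.ne' (Real.exp_ne_zero _), Real.log_exp]
      have hlog : Real.log m ≤ Real.log (m + t₁) := Real.log_le_log hm (by linarith)
      have hlog2 : 0 < Real.log 2 := Real.log_pos one_lt_two
      have haδ : 0 < 2 * a * δ := by positivity
      have hmt₁ : m - t₁ = δ := by rw [ht₁def]; ring
      have key : ψ t₁ = Real.log δ + 2 * a * t₁ - Real.log (m + t₁) := by
        simp only [hψdef, hmt₁]
      have h2at : 2 * a * t₁ = 2 * a * m - 2 * a * δ := by rw [ht₁def]; ring
      rw [key, hlogδ]
      linarith [hlog, hlog2, haδ, h2at]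
    have hrt₁ : r < t₁ := by
      by_contra h
      push_neg at h
      have := hmono ⟨le_refl 0, by linarith [ht₁pos]⟩ ⟨ht₁pos.le, h⟩ ht₁pos
      rw [hψ0] at this
      linarith
    obtain ⟨tstar, hmem, hψts⟩ : ∃ x ∈ Icc r t₁, ψ x = 0 := by
      have hsub : Icc r t₁ ⊆ Ico 0 m := fun x hx =>
        ⟨le_trans hrpos.le hx.1, lt_of_le_of_lt hx.2 ht₁m⟩
      have := intermediate_value_Icc' hrt₁.le (contψ.mono hsub)
        (⟨hψt₁.le, hψr.le⟩ : (0:ℝ) ∈ Icc (ψ t₁) (ψ r))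
      obtain ⟨x, hx, hx0⟩ := this
      exact ⟨x, hx, hx0⟩
    have hts_r : r < tstar := by
      rcases lt_or_eq_of_le hmem.1 with h | h
      · exact h
      · exfalso; rw [← h] at hψts; linarith
    have hts_m : tstar < m := lt_of_le_of_lt hmem.2 ht₁m
    have hts_pos : 0 < tstar := lt_trans hrpos hts_r
    refine ⟨tstar, ⟨hts_pos.le, hts_m⟩, ?_, ?_, ?_⟩
    rotate_left 2
    · have h2 : r ^ 2 ≤ tstar ^ 2 := pow_le_pow_left₀ hrpos.le hts_r.le 2
      linarith [hr2]
    · intro t ht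
      obtain ⟨ht0, htts⟩ := ht
      apply hpos
      apply hψφ_pos t ht0.le (lt_trans htts hts_m)
      rcases le_or_gt t r with h | h
      · have := hmono ⟨le_refl 0, hrpos.le⟩ ⟨ht0.le, h⟩ ht0
        rw [hψ0] at this; linarith
      · have := hanti ⟨h.le, lt_trans htts hts_m⟩ ⟨hts_r.le, hts_m⟩ htts
        rw [hψts] at this
        linarith
    · intro t ht
      have htts : tstar < t := ht
      rcases lt_or_ge t m with htm | htm
      · apply hneg
        apply hψφ_neg t (by linarith) htm
        have := hanti ⟨hts_r.le, hts_m⟩ ⟨by linarith [hts_r], htm⟩ htts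
        rw [hψts] at this
        linarith
      · exact hneg t (hφ_ge t htm)
end
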